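/- arXiv:1005.1338 — 8 statements merged into one kernel-verified Lean document; each statement's English description precedes it below -/
import Mathlib

section
/- For every β > 0 and every θ ∈ ℝ, the U(1) heat kernel is strictly positive: K₁(θ, β) > 0. -/
open Real

/-- The `U(1)` heat kernel `K₁(θ, β) = Σ_{n ∈ ℤ} exp(2πinθ − (2πn)²β)`, written in its
real-valued form `Σ_{n ∈ ℤ} e^{−(2πn)²β} cos(2πnθ)` (the imaginary parts of the `n` and `−n`
terms cancel). -/
noncomputable def K1 (θ β : ℝ) : ℝ :=
  ∑' n : ℤ, Real.exp (-((2 * Real.pi * (n : ℝ)) ^ 2 * β)) * Real.cos (2 * Real.pi * (n : ℝ) * θ)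

/-! Poisson summation (Jacobi's transformation of the theta function) turns the Fourier series
`K₁(θ, β)` into `(4πβ)^{-1/2} Σₙ exp(-(θ - n)² / 4β)`, the heat kernel of `ℝ` periodized over
`ℤ`. That is a convergent sum of positive terms. -/

lemma summable_exp_neg_pi_mul_int_add_sq {a : ℝ} (ha : 0 < a) (x : ℝ) :
    Summable fun n : ℤ ↦ exp (-π * a * (n + x) ^ 2) :=
  (HurwitzKernelBounds.summable_f_int 0 x ha).congr fun n ↦ by
    rw [HurwitzKernelBounds.f_int, pow_zero, one_mul, mul_right_comm]

lemma tsum_exp_neg_pi_mul_int_sq_mul_cos {a : ℝ} (ha : 0 < a) (θ : ℝ) :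
    ∑' n : ℤ, exp (-π * a * n ^ 2) * cos (2 * π * n * θ) =
      1 / a ^ (1 / 2 : ℝ) * ∑' n : ℤ, exp (-π / a * (n - θ) ^ 2) := by
  have hjacobi := Complex.tsum_exp_neg_quadratic (a := a) (by simpa using ha) (Complex.I * θ)
  have hlhs (n : ℤ) : -π * a * n ^ 2 + 2 * π * (Complex.I * θ) * n =
      ((-π * a * n ^ 2 : ℝ) : ℂ) + ((2 * π * n * θ : ℝ) : ℂ) * Complex.I := by
    push_cast
    ring
  have hrhs (n : ℤ) : Complex.exp (-π / a * (n + Complex.I * (Complex.I * θ)) ^ 2) =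
      ((exp (-π / a * (n - θ) ^ 2) : ℝ) : ℂ) := by
    rw [← mul_assoc, Complex.I_mul_I]
    push_cast
    ring_nf
  have hsqrt : (a : ℂ) ^ (1 / 2 : ℂ) = ((a ^ (1 / 2 : ℝ) : ℝ) : ℂ) := by
    rw [Complex.ofReal_cpow ha.le]
    norm_num
  have hsummable : Summable fun n : ℤ ↦
      Complex.exp (-π * a * n ^ 2 + 2 * π * (Complex.I * θ) * n) := by
    refine .of_norm ((summable_exp_neg_pi_mul_int_add_sq ha 0).congr fun n ↦ ?_)
    rw [hlhs, Complex.norm_exp, Complex.add_re, Complex.ofReal_re, Complex.mul_I_re,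
      Complex.ofReal_im, neg_zero, add_zero, add_zero]
  have hre := congrArg Complex.re hjacobi
  rw [Complex.re_tsum hsummable, tsum_congr hrhs, ← Complex.ofReal_tsum, hsqrt] at hre
  convert hre using 1
  · refine tsum_congr fun n ↦ ?_
    simp only [hlhs, Complex.exp_re, Complex.add_re, Complex.add_im, Complex.ofReal_re,
      Complex.ofReal_im, Complex.mul_I_re, Complex.mul_I_im, neg_zero, add_zero, zero_add]
  · norm_cast

lemma K1_eq_tsum_gaussian (θ : ℝ) {β : ℝ} (hβ : 0 < β) :
    K1 θ β = 1 / √(4 * π * β) * ∑' n : ℤ, exp (-(θ - n) ^ 2 / (4 * β)) := by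
  have hexponent (n : ℤ) : -π / (4 * π * β) * (n - θ) ^ 2 = -(θ - n) ^ 2 / (4 * β) := by
    field_simp
    ring
  rw [sqrt_eq_rpow, ← tsum_congr fun n ↦ congrArg exp (hexponent n),
    ← tsum_exp_neg_pi_mul_int_sq_mul_cos (by positivity), K1]
  refine tsum_congr fun n ↦ ?_
  rw [show -((2 * π * n) ^ 2 * β) = -π * (4 * π * β) * n ^ 2 by ring]

/-- For every `β > 0` and every `θ`, the `U(1)` heat kernel is strictly positive. -/
theorem u1_heat_kernel_pos (β : ℝ) (hβ : 0 < β) (θ : ℝ) : 0 < K1 θ β := by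
  have hsummable : Summable fun n : ℤ ↦ exp (-(θ - n) ^ 2 / (4 * β)) := by
    convert summable_exp_neg_pi_mul_int_add_sq (inv_pos.2 (by positivity : 0 < 4 * π * β)) (-θ)
      using 3
    field_simp
    ring
  rw [K1_eq_tsum_gaussian θ hβ]
  exact mul_pos (by positivity) (hsummable.tsum_pos (fun _ ↦ (exp_pos _).le) 0 (exp_pos _))
end

section
/- For every β > 0 and all Θ₁, Θ₂, Θ₃, Θ₄ ∈ ℝ, the U(1) heat-kernel densities at time β/4 on the four subdivided plaquettes reproduce, after integrating out the eight internal link variables, the heat-kernel density at time β on the original plaquette: ∫_{[0,1]⁸} K₁(−g₁ + Θ₁ + g₂ − y₂ − y₁, β/4) · K₁(y₂ − g₂ + Θ₂ − g₃ − y₃, β/4) · K₁(y₄ + y₃ + g₃ − Θ₃ − g₄, β/4) · K₁(g₁ + y₁ − y₄ + g₄ − Θ₄, β/4) dg₁ dg₂ dg₃ dg₄ dy₁ dy₂ dy₃ dy₄ = K₁(Θ₁ + Θ₂ − Θ₃ − Θ₄, β). (This is the measure consistency condition for one plaquette subdivision in the U(1) gauge theory, verifying that the rescaling β ↦ β/4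 per subdivision yields a consistent family of measures.) -/
open Real

/-!
`K1 θ β` is the Jacobi theta function `jacobiTheta₂ θ (4πiβ)`, whose `n`-th Fourier coefficient
`e^{-(2πn)²β}` is multiplicative in `β`. Integrating a product of two such kernels over a shared
link variable is a convolution on the circle, and by orthogonality of the Fourier modes only the
diagonal terms survive: `K1(·, β₁) ⋆ K1(·, β₂) = K1(·, β₁ + β₂)`. Integrating out `y₄`, `y₃`, `y₂`
in turn is each time such a convolution; together they collapse the four kernels at time `β/4`
into one at time `β`, evaluated at the holonomy `Θ₁ + Θ₂ - Θ₃ - Θ₄`, after which the remaining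
five variables no longer occur.
-/

open Complex MeasureTheory
open scoped ComplexConjugate

theorem integral_cexp_two_pi_I_int_mul (k : ℤ) :
    ∫ t in (0 : ℝ)..1, cexp (2 * π * I * k * t) = if k = 0 then 1 else 0 := by
  split_ifs with hk
  · simp [hk]
  · have hc : 2 * π * I * k ≠ 0 := by simp [hk, pi_ne_zero, I_ne_zero]
    rw [integral_exp_mul_complex hc, ofReal_one, ofReal_zero, mul_one, mul_zero, Complex.exp_zero,
      show 2 * π * I * k = k * (2 * π * I) by ring, exp_int_mul_two_pi_mul_I, sub_self, zero_div]

theorem integral_jacobiTheta₂_term_sub_mul_add (n m : ℤ) (a b τ₁ τ₂ : ℂ) :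
    ∫ t in (0 : ℝ)..1, jacobiTheta₂_term n (a - t) τ₁ * jacobiTheta₂_term m (t + b) τ₂ =
      if m = n then jacobiTheta₂_term n (a + b) (τ₁ + τ₂) else 0 := by
  have hsplit : ∀ t : ℝ, jacobiTheta₂_term n (a - t) τ₁ * jacobiTheta₂_term m (t + b) τ₂ =
      cexp (2 * π * I * n * a + 2 * π * I * m * b + π * I * (n ^ 2 * τ₁ + m ^ 2 * τ₂)) *
        cexp (2 * π * I * (m - n : ℤ) * t) := by
    intro t
    rw [jacobiTheta₂_term, jacobiTheta₂_term, ← Complex.exp_add, ← Complex.exp_add]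
    congr 1
    push_cast
    ring
  simp only [hsplit, intervalIntegral.integral_const_mul, integral_cexp_two_pi_I_int_mul,
    sub_eq_zero]
  split_ifs with h
  · subst h
    rw [mul_one, jacobiTheta₂_term]
    congr 1
    ring
  · exact mul_zero _

theorem norm_jacobiTheta₂_term_sub_ofReal (n : ℤ) (z τ : ℂ) (t : ℝ) :
    ‖jacobiTheta₂_term n (z - t) τ‖ = ‖jacobiTheta₂_term n z τ‖ := by
  simp only [norm_jacobiTheta₂_term, sub_im, ofReal_im, sub_zero]

theorem norm_jacobiTheta₂_term_ofReal_add (n : ℤ) (z τ : ℂ) (t : ℝ) :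
    ‖jacobiTheta₂_term n (t + z) τ‖ = ‖jacobiTheta₂_term n z τ‖ := by
  simp only [norm_jacobiTheta₂_term, add_im, ofReal_im, zero_add]

theorem summable_norm_jacobiTheta₂_term (z : ℂ) {τ : ℂ} (hτ : 0 < τ.im) :
    Summable fun n : ℤ => ‖jacobiTheta₂_term n z τ‖ :=
  ((summable_jacobiTheta₂_term_iff z τ).2 hτ).norm

theorem hasSum_jacobiTheta₂_term_mul {τ₁ τ₂ : ℂ} (h₁ : 0 < τ₁.im) (h₂ : 0 < τ₂.im) (z₁ z₂ : ℂ) :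
    HasSum (fun p : ℤ × ℤ => jacobiTheta₂_term p.1 z₁ τ₁ * jacobiTheta₂_term p.2 z₂ τ₂)
      (jacobiTheta₂ z₁ τ₁ * jacobiTheta₂ z₂ τ₂) := by
  have hs := summable_mul_of_summable_norm (f := (jacobiTheta₂_term · z₁ τ₁))
    (g := (jacobiTheta₂_term · z₂ τ₂)) (summable_norm_jacobiTheta₂_term z₁ h₁)
    (summable_norm_jacobiTheta₂_term z₂ h₂)
  exact HasSum.mul (f := (jacobiTheta₂_term · z₁ τ₁)) (g := (jacobiTheta₂_term · z₂ τ₂))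
    (hasSum_jacobiTheta₂_term z₁ h₁) (hasSum_jacobiTheta₂_term z₂ h₂) hs

theorem integral_jacobiTheta₂_sub_mul_add {τ₁ τ₂ : ℂ} (h₁ : 0 < τ₁.im) (h₂ : 0 < τ₂.im)
    (a b : ℂ) :
    ∫ t in (0 : ℝ)..1, jacobiTheta₂ (a - t) τ₁ * jacobiTheta₂ (t + b) τ₂ =
      jacobiTheta₂ (a + b) (τ₁ + τ₂) := by
  set F : ℤ × ℤ → ℝ → ℂ := fun p t =>
    jacobiTheta₂_term p.1 (a - t) τ₁ * jacobiTheta₂_term p.2 (t + b) τ₂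
  set bound : ℤ × ℤ → ℝ := fun p => ‖jacobiTheta₂_term p.1 a τ₁‖ * ‖jacobiTheta₂_term p.2 b τ₂‖
  have hbound : Summable bound :=
    (summable_norm_jacobiTheta₂_term a h₁).mul_of_nonneg (summable_norm_jacobiTheta₂_term b h₂)
      (fun _ => norm_nonneg _) (fun _ => norm_nonneg _)
  have hF : HasSum (fun p => ∫ t in (0 : ℝ)..1, F p t)
      (∫ t in (0 : ℝ)..1, jacobiTheta₂ (a - t) τ₁ * jacobiTheta₂ (t + b) τ₂) := by
    refine intervalIntegral.hasSum_integral_of_dominated_convergence (fun p _ => bound p)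
      (fun p => Continuous.aestronglyMeasurable ?_) (fun p => ae_of_all _ fun t _ => ?_)
      (ae_of_all _ fun _ _ => hbound) intervalIntegrable_const (ae_of_all _ fun t _ => ?_)
    · simp only [F, jacobiTheta₂_term]
      fun_prop
    · simp only [F, bound, norm_mul, norm_jacobiTheta₂_term_sub_ofReal,
        norm_jacobiTheta₂_term_ofReal_add, le_refl]
    · exact hasSum_jacobiTheta₂_term_mul h₁ h₂ _ _
  have hdiag : HasSum (fun p => ∫ t in (0 : ℝ)..1, F p t) (jacobiTheta₂ (a + b) (τ₁ + τ₂)) := by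
    simp only [F, integral_jacobiTheta₂_term_sub_mul_add]
    refine (Function.Injective.hasSum_iff (g := fun n : ℤ => (n, n))
      (fun m n h => congrArg Prod.fst h)
      fun p hp => if_neg fun h => hp ⟨p.1, Prod.ext rfl h.symm⟩).1 ?_
    simpa [Function.comp_def] using
      hasSum_jacobiTheta₂_term (a + b) (by simpa using add_pos h₁ h₂)
  exact hF.unique hdiag

theorem re_jacobiTheta₂_term_ofReal (n : ℤ) (θ β : ℝ) :
    (jacobiTheta₂_term n θ (4 * π * β * I)).re =
      rexp (-((2 * π * n) ^ 2 * β)) * Real.cos (2 * π * n * θ) := by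
  have harg : 2 * π * I * n * θ + π * I * n ^ 2 * (4 * π * β * I) =
      ((-((2 * π * n) ^ 2 * β) : ℝ) : ℂ) + ((2 * π * n * θ : ℝ) : ℂ) * I := by
    push_cast
    linear_combination (4 * π ^ 2 * n ^ 2 * β : ℂ) * I_sq
  rw [jacobiTheta₂_term, harg, exp_re]
  simp only [add_re, add_im, ofReal_re, ofReal_im, mul_I_re, mul_I_im, neg_zero, add_zero,
    zero_add]

theorem im_four_pi_mul_I_pos {β : ℝ} (hβ : 0 < β) : 0 < (4 * π * β * I).im := by
  simpa using by positivity

theorem ofReal_K1 (θ : ℝ) {β : ℝ} (hβ : 0 < β) :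
    (K1 θ β : ℂ) = jacobiTheta₂ θ (4 * π * β * I) := by
  have hreal : conj (jacobiTheta₂ θ (4 * π * β * I)) = jacobiTheta₂ θ (4 * π * β * I) := by
    rw [jacobiTheta₂_conj, conj_ofReal]
    congr 1
    simp only [map_mul, conj_ofReal, conj_I, map_ofNat]
    ring
  rw [← conj_eq_iff_re.1 hreal, K1, ← (hasSum_re (hasSum_jacobiTheta₂_term θ (im_four_pi_mul_I_pos hβ))).tsum_eq]
  simp only [re_jacobiTheta₂_term_ofReal]

theorem integral_K1_sub_mul_K1_add {β₁ β₂ : ℝ} (h₁ : 0 < β₁) (h₂ : 0 < β₂) (a b : ℝ) :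
    ∫ t in (0 : ℝ)..1, K1 (a - t) β₁ * K1 (t + b) β₂ = K1 (a + b) (β₁ + β₂) := by
  apply ofReal_injective
  rw [← intervalIntegral.integral_ofReal]
  push_cast
  simp only [ofReal_K1 _ h₁, ofReal_K1 _ h₂, ofReal_K1 _ (add_pos h₁ h₂)]
  push_cast
  rw [integral_jacobiTheta₂_sub_mul_add (im_four_pi_mul_I_pos h₁) (im_four_pi_mul_I_pos h₂)]
  congr 1
  ring

-- Phrased through `u`, `v` so that it applies to the integrands of the main theorem as they stand.
theorem integral_K1_mul_K1_of_add_eq {β₁ β₂ c : ℝ} (h₁ : 0 < β₁) (h₂ : 0 < β₂) {u v : ℝ → ℝ}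
    (hu : ∀ t, u t = u 0 - t) (huv : ∀ t, u t + v t = c) :
    ∫ t in (0 : ℝ)..1, K1 (u t) β₁ * K1 (v t) β₂ = K1 c (β₁ + β₂) := by
  have hv (t : ℝ) : v t = t + (c - u 0) := by linarith [hu t, huv t]
  have huv' : (fun t => K1 (u t) β₁ * K1 (v t) β₂) =
      fun t => K1 (u 0 - t) β₁ * K1 (t + (c - u 0)) β₂ :=
    funext fun t => by rw [hu t, hv t]
  rw [huv', integral_K1_sub_mul_K1_add h₁ h₂, add_sub_cancel]

/-- Measure consistency condition for one plaquette subdivision in the `U(1)` gauge theory: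
with the rescaling `β ↦ β/4`, integrating the heat-kernel densities of the four subdivided
plaquettes over the eight internal link variables reproduces the heat-kernel density at time
`β` on the original plaquette. -/
theorem u1_plaquette_subdivision_consistency (β : ℝ) (hβ : 0 < β) (Θ₁ Θ₂ Θ₃ Θ₄ : ℝ) :
    (∫ g₁ in (0 : ℝ)..1, ∫ g₂ in (0 : ℝ)..1, ∫ g₃ in (0 : ℝ)..1, ∫ g₄ in (0 : ℝ)..1,
      ∫ y₁ in (0 : ℝ)..1, ∫ y₂ in (0 : ℝ)..1, ∫ y₃ in (0 : ℝ)..1, ∫ y₄ in (0 : ℝ)..1,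
        K1 (-g₁ + Θ₁ + g₂ - y₂ - y₁) (β / 4) *
        K1 (y₂ - g₂ + Θ₂ - g₃ - y₃) (β / 4) *
        K1 (y₄ + y₃ + g₃ - Θ₃ - g₄) (β / 4) *
        K1 (g₁ + y₁ - y₄ + g₄ - Θ₄) (β / 4)) =
      K1 (Θ₁ + Θ₂ - Θ₃ - Θ₄) β := by
  have hq : 0 < β / 4 := by positivity
  have h_y₄ : ∀ g₁ g₂ g₃ g₄ y₁ y₂ y₃ : ℝ, ∫ y₄ in (0 : ℝ)..1,
      K1 (-g₁ + Θ₁ + g₂ - y₂ - y₁) (β / 4) * K1 (y₂ - g₂ + Θ₂ - g₃ - y₃) (β / 4) *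
        K1 (y₄ + y₃ + g₃ - Θ₃ - g₄) (β / 4) * K1 (g₁ + y₁ - y₄ + g₄ - Θ₄) (β / 4) =
      K1 (-g₁ + Θ₁ + g₂ - y₂ - y₁) (β / 4) * (K1 (y₂ - g₂ + Θ₂ - g₃ - y₃) (β / 4) *
        K1 (y₃ + g₃ - Θ₃ + g₁ + y₁ - Θ₄) (β / 4 + β / 4)) := by
    intro g₁ g₂ g₃ g₄ y₁ y₂ y₃
    simp only [mul_assoc, intervalIntegral.integral_const_mul]
    simp only [mul_comm (K1 (_ + y₃ + g₃ - Θ₃ - g₄) _)]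
    congr 2
    exact integral_K1_mul_K1_of_add_eq hq hq (fun t => by ring) (fun t => by ring)
  have h_y₃ : ∀ g₁ g₂ g₃ y₁ y₂ : ℝ, ∫ y₃ in (0 : ℝ)..1,
      K1 (-g₁ + Θ₁ + g₂ - y₂ - y₁) (β / 4) * (K1 (y₂ - g₂ + Θ₂ - g₃ - y₃) (β / 4) *
        K1 (y₃ + g₃ - Θ₃ + g₁ + y₁ - Θ₄) (β / 4 + β / 4)) =
      K1 (-g₁ + Θ₁ + g₂ - y₂ - y₁) (β / 4) *
        K1 (y₂ - g₂ + Θ₂ - Θ₃ + g₁ + y₁ - Θ₄) (β / 4 + (β / 4 + β / 4)) := by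
    intro g₁ g₂ g₃ y₁ y₂
    rw [intervalIntegral.integral_const_mul]
    congr 1
    exact integral_K1_mul_K1_of_add_eq hq (by positivity) (fun t => by ring) (fun t => by ring)
  have h_y₂ : ∀ g₁ g₂ y₁ : ℝ, ∫ y₂ in (0 : ℝ)..1,
      K1 (-g₁ + Θ₁ + g₂ - y₂ - y₁) (β / 4) *
        K1 (y₂ - g₂ + Θ₂ - Θ₃ + g₁ + y₁ - Θ₄) (β / 4 + (β / 4 + β / 4)) =
      K1 (Θ₁ + Θ₂ - Θ₃ - Θ₄) β := by
    intro g₁ g₂ y₁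
    rw [integral_K1_mul_K1_of_add_eq (c := Θ₁ + Θ₂ - Θ₃ - Θ₄) hq (by positivity)
      (fun t => by ring) (fun t => by ring)]
    congr 1
    ring
  simp only [h_y₄, h_y₃, h_y₂, intervalIntegral.integral_const, sub_zero, one_smul]
end

section
/- As β → 0⁺, the rescaled U(1) heat kernel converges uniformly on [−1/2, 1/2] to the Gaussian density: lim_{β→0⁺} sup_{θ ∈ [−1/2, 1/2]} | √(4πβ) · K₁(θ, β) − exp(−θ²/(4β)) | = 0. (Hence at small scales the U(1) heat-kernel measure coincides with the usual Gaussian measure of the abelian gauge theory.) -/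
/-!
By Jacobi's theta transformation (Poisson summation for the Gaussian), `√(4πβ) K₁(θ, β)` is the
periodized Gaussian `∑ₙ exp (-(n - θ)² / (4β))`. Its `n = 0` term is `exp (-θ² / (4β))`, and for
`|θ| ≤ 1/2` and `β ≤ 1/32` each remaining term is at most `exp (-1 / (32β)) · exp (-n²)`, so the
error is `O(exp (-1 / (32β)))` uniformly in `θ`.
-/

open Real

open Filter

lemma summable_exp_neg_mul_int_sq {c : ℝ} (hc : 0 < c) :
    Summable fun n : ℤ => exp (-(c * n ^ 2)) := by
  have him : (c / π * Complex.I).im = c / π := by simp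
  have hτ : 0 < (c / π * Complex.I).im := by rw [him]; positivity
  refine ((summable_jacobiTheta₂_term_iff 0 _).2 hτ).norm.congr fun n => ?_
  rw [norm_jacobiTheta₂_term, him, Complex.zero_im]
  field_simp
  congr 1
  ring

open Complex in
theorem sqrt_mul_K1_eq_tsum_exp (θ : ℝ) {β : ℝ} (hβ : 0 < β) :
    √(4 * π * β) * K1 θ β = ∑' n : ℤ, rexp (-(n - θ) ^ 2 / (4 * β)) := by
  set a : ℝ := 4 * π * β
  have ha : 0 < a := by positivity
  have hterm (n : ℤ) : -π * (a : ℂ) * n ^ 2 + 2 * π * (I * θ) * n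
      = ((-((2 * π * n) ^ 2 * β) : ℝ) : ℂ) + ((2 * π * n * θ : ℝ) : ℂ) * I := by
    simp only [a]; push_cast; ring
  have hdual (n : ℤ) :
      -π / (a : ℂ) * (n + I * (I * θ)) ^ 2 = ((-(n - θ) ^ 2 / (4 * β) : ℝ) : ℂ) := by
    have : (π : ℂ) ≠ 0 := ofReal_ne_zero.2 pi_ne_zero
    have : (β : ℂ) ≠ 0 := ofReal_ne_zero.2 hβ.ne'
    rw [← mul_assoc, I_mul_I]; simp only [a]; push_cast; field_simp; ring
  have hsum : Summable fun n : ℤ =>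
      cexp (((-((2 * π * n) ^ 2 * β) : ℝ) : ℂ) + ((2 * π * n * θ : ℝ) : ℂ) * I) := by
    refine .of_norm ((summable_exp_neg_mul_int_sq (c := 4 * π ^ 2 * β) (by positivity)).congr
      fun n => ?_)
    rw [norm_exp, add_re, ofReal_re, re_ofReal_mul, I_re, mul_zero, add_zero]
    ring_nf
  have hsqrt : (a : ℂ) ^ (1 / 2 : ℂ) = (√a : ℝ) := by
    rw [sqrt_eq_rpow, ofReal_cpow ha.le]; norm_num
  have key := congrArg re (tsum_exp_neg_quadratic (a := a) (by simpa using ha) (I * θ))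
  simp only [hterm, hdual, re_tsum hsum, exp_re, add_re, add_im, ofReal_re, ofReal_im,
    re_ofReal_mul, im_ofReal_mul, I_re, I_im, mul_zero, mul_one, add_zero, zero_add, ← ofReal_exp,
    ← ofReal_tsum] at key
  rw [hsqrt, one_div, ← ofReal_inv, ← ofReal_mul, ofReal_re] at key
  rw [K1, key]
  field_simp

lemma sq_div_four_le_sub_sq {x θ : ℝ} (hx : 1 ≤ |x|) (hθ : |θ| ≤ 1 / 2) :
    x ^ 2 / 4 ≤ (x - θ) ^ 2 := by
  have : |x| / 2 ≤ |x - θ| := by linarith [abs_sub_abs_le_abs_sub x θ]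
  nlinarith [sq_abs x, sq_abs (x - θ)]

lemma inv_div_add_sq_le_sub_sq_div {β θ : ℝ} (hβ : 0 < β) (hβ' : β ≤ 1 / 32)
    (hθ : |θ| ≤ 1 / 2) {n : ℤ} (hn : n ≠ 0) : β⁻¹ / 32 + n ^ 2 ≤ (n - θ) ^ 2 / (4 * β) := by
  have hn1 : (1 : ℝ) ≤ |(n : ℝ)| := by rw [← Int.cast_abs]; exact_mod_cast Int.one_le_abs hn
  have hsq := sq_div_four_le_sub_sq hn1 hθ
  have : (1 : ℝ) ≤ n ^ 2 := by nlinarith [sq_abs (n : ℝ)]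
  have h8 : β⁻¹ / 32 * (4 * β) = 1 / 8 := by field_simp; norm_num
  rw [le_div_iff₀ (by positivity), add_mul, h8]
  nlinarith

theorem abs_sqrt_mul_K1_sub_exp_le {β θ : ℝ} (hβ : 0 < β) (hβ' : β ≤ 1 / 32)
    (hθ : |θ| ≤ 1 / 2) :
    |√(4 * π * β) * K1 θ β - exp (-(θ ^ 2) / (4 * β))|
      ≤ exp (-(β⁻¹ / 32)) * ∑' n : ℤ, exp (-(n ^ 2)) := by
  set f : ℤ → ℝ := fun n => exp (-(n - θ) ^ 2 / (4 * β))
  have htail (n : ℤ) : (if n = 0 then 0 else f n) ≤ exp (-(β⁻¹ / 32)) * exp (-(n ^ 2)) := by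
    split_ifs with hn
    · positivity
    · rw [← exp_add, exp_le_exp, neg_div]
      linarith [inv_div_add_sq_le_sub_sq_div hβ hβ' hθ hn]
  have hsummable : Summable fun n : ℤ => exp (-(β⁻¹ / 32)) * exp (-(n ^ 2)) := by
    simpa using (summable_exp_neg_mul_int_sq one_pos).mul_left (exp (-(β⁻¹ / 32)))
  have htail_summable : Summable fun n : ℤ => if n = 0 then 0 else f n :=
    .of_nonneg_of_le (fun n => by positivity) htail hsummable
  rw [sqrt_mul_K1_eq_tsum_exp θ hβ, Summable.tsum_eq_add_tsum_ite' 0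
    (by simpa only [← Function.update_apply] using htail_summable), Int.cast_zero, zero_sub, neg_sq,
    add_sub_cancel_left, ← tsum_mul_left,
    abs_of_nonneg (tsum_nonneg fun n => by split_ifs <;> positivity)]
  exact htail_summable.tsum_le_tsum htail hsummable

/-- As `β → 0⁺`, the rescaled `U(1)` heat kernel converges uniformly on `[−1/2, 1/2]` to the
Gaussian density: `sup_{θ ∈ [−1/2,1/2]} |√(4πβ) K₁(θ, β) − exp(−θ²/(4β))| → 0`. -/
theorem u1_heat_kernel_small_scale_gaussian :
    Tendsto
      (fun β : ℝ => ⨆ θ ∈ Set.Icc (-(1 : ℝ) / 2) (1 / 2),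
        |Real.sqrt (4 * Real.pi * β) * K1 θ β - Real.exp (-(θ ^ 2) / (4 * β))|)
      (nhdsWithin 0 (Set.Ioi 0)) (nhds 0) := by
  set C := ∑' n : ℤ, exp (-(n ^ 2))
  have hbound :
      Tendsto (fun β : ℝ => exp (-(β⁻¹ / 32)) * C) (nhdsWithin 0 (Set.Ioi 0)) (nhds 0) := by
    simpa using (tendsto_exp_neg_atTop_nhds_zero.comp
      (tendsto_inv_nhdsGT_zero.atTop_div_const (by norm_num : (0 : ℝ) < 32))).mul_const C
  refine squeeze_zero' (.of_forall fun _ => Real.iSup_nonneg fun _ => Real.iSup_nonneg fun _ =>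
    abs_nonneg _) ?_ hbound
  filter_upwards [Ioo_mem_nhdsGT (by norm_num : (0 : ℝ) < 1 / 32)] with β hβ
  have hg : 0 ≤ exp (-(β⁻¹ / 32)) * C := by positivity
  refine Real.iSup_le (fun θ => Real.iSup_le (fun hθ => ?_) hg) hg
  exact abs_sqrt_mul_K1_sub_exp_le hβ.1 hβ.2.le (abs_le.2 ⟨by linarith [hθ.1], hθ.2⟩)
end

section
/- Let G be a compact topological group with normalized Haar probability measure μ_H, and let p′, p″, p : G → ℝ be continuous central functions for which there exist constants c₁, c₂ > 0 such that ∫_G p′(aX) p′(X⁻¹b) dμ_H(X) = c₁ · p″(ab) and ∫_G p″(aX) p″(X⁻¹b) dμ_H(X) = c₂ · p(ab) for all a, b ∈ G. Then for all G₁, G₂, G₃, G₄ ∈ G, ∫_{G⁴} p′(X₁⁻¹ G₁ X₂) · p′(X₂⁻¹ G₂ X₃) · p′(X₃⁻¹ G₃⁻¹ X₄) · p′(X₄⁻¹ G₄⁻¹ X₁) dμ_H(X₁) dμ_H(X₂) dμ_H(X₃) dμ_H(X₄) = c₁² c₂ · p(G₁ G₂ G₃⁻¹ G₄⁻¹). (Hence,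 if such a sequence of central functions exists for plaquette subdivisions of all sizes, an interaction measure exists on the projective limit; the proportionality constants are absorbed in the normalization.) -/
/-!
Integrate the link variables out one at a time. The first relation removes `X₄`, merging the
third and fourth fine plaquettes into a rectangle; after exchanging the `X₂`- and
`X₃`-integrals (Fubini, harmless since all integrands are continuous on a compact space) it
removes `X₂` in the same way. The second relation then removes `X₃`, leaving
`p (X₁⁻¹ * (G₁ * G₂ * G₃⁻¹ * G₄⁻¹) * X₁)`, which by centrality does not depend on `X₁` and so
integrates to itself against the probability measure `μ`.
-/

open MeasureTheory

theorem integral_integral_swap_of_continuous {X Y E : Type*}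
    [TopologicalSpace X] [TopologicalSpace Y] [CompactSpace X] [CompactSpace Y]
    [MeasurableSpace X] [MeasurableSpace Y] [OpensMeasurableSpace X] [OpensMeasurableSpace Y]
    [NormedAddCommGroup E] [NormedSpace ℝ E]
    {μ : Measure X} {ν : Measure Y} [IsFiniteMeasure μ] [IsFiniteMeasure ν]
    {f : X → Y → E} (hf : Continuous f.uncurry) :
    ∫ x, ∫ y, f x y ∂ν ∂μ = ∫ y, ∫ x, f x y ∂μ ∂ν :=
  integral_integral_swap_of_hasCompactSupport hf (.of_compactSpace _)

section Group

variable {G : Type*} [Group G]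

theorem apply_inv_mul_mul_self_of_central {α : Type*} {p : G → α}
    (hp : ∀ x y : G, p (x * y) = p (y * x)) (g X : G) :
    p (X⁻¹ * g * X) = p g := by
  rw [mul_assoc, hp, mul_inv_cancel_right]

variable [MeasurableSpace G] {μ : Measure G}

theorem integral_gauge_mul_gauge_of_convolution {f g : G → ℝ} {c : ℝ}
    (h : ∀ a b : G, ∫ Y, f (a * Y) * f (Y⁻¹ * b) ∂μ = c * g (a * b)) (X Z a b : G) :
    ∫ Y, f (X⁻¹ * a * Y) * f (Y⁻¹ * b * Z) ∂μ = c * g (X⁻¹ * (a * b) * Z) := by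
  simp_rw [mul_assoc _ b Z, h, mul_assoc]

end Group

theorem plaquette_subdivision_convolution_identity_general
    {G : Type*} [Group G] [TopologicalSpace G] [IsTopologicalGroup G] [CompactSpace G]
    [MeasurableSpace G] [BorelSpace G]
    (μ : Measure G) [IsProbabilityMeasure μ]
    (p' p'' p : G → ℝ)
    (hp'cont : Continuous p') (hp''cont : Continuous p'')
    (hpcentral : ∀ x y : G, p (x * y) = p (y * x))
    (c₁ c₂ : ℝ)
    (h₁ : ∀ a b : G, ∫ X, p' (a * X) * p' (X⁻¹ * b) ∂μ = c₁ * p'' (a * b))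
    (h₂ : ∀ a b : G, ∫ X, p'' (a * X) * p'' (X⁻¹ * b) ∂μ = c₂ * p (a * b))
    (G₁ G₂ G₃ G₄ : G) :
    (∫ X₁, ∫ X₂, ∫ X₃, ∫ X₄,
        p' (X₁⁻¹ * G₁ * X₂) * p' (X₂⁻¹ * G₂ * X₃) * p' (X₃⁻¹ * G₃⁻¹ * X₄) *
          p' (X₄⁻¹ * G₄⁻¹ * X₁) ∂μ ∂μ ∂μ ∂μ) =
      c₁ ^ 2 * c₂ * p (G₁ * G₂ * G₃⁻¹ * G₄⁻¹) := by
  calc _ = c₁ * ∫ X₁, ∫ X₂, ∫ X₃, p' (X₁⁻¹ * G₁ * X₂) * p' (X₂⁻¹ * G₂ * X₃) *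
          p'' (X₃⁻¹ * (G₃⁻¹ * G₄⁻¹) * X₁) ∂μ ∂μ ∂μ := by
        simp_rw [mul_assoc (p' _ * p' _), integral_const_mul,
          integral_gauge_mul_gauge_of_convolution h₁, mul_left_comm _ c₁, integral_const_mul]
    _ = c₁ * ∫ X₁, ∫ X₃, ∫ X₂, p' (X₁⁻¹ * G₁ * X₂) * p' (X₂⁻¹ * G₂ * X₃) *
          p'' (X₃⁻¹ * (G₃⁻¹ * G₄⁻¹) * X₁) ∂μ ∂μ ∂μ := by
        congr 2 with X₁
        exact integral_integral_swap_of_continuous (by fun_prop)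
    _ = c₁ * c₁ * ∫ X₁, ∫ X₃, p'' (X₁⁻¹ * (G₁ * G₂) * X₃) *
          p'' (X₃⁻¹ * (G₃⁻¹ * G₄⁻¹) * X₁) ∂μ ∂μ := by
        simp_rw [integral_mul_const, integral_gauge_mul_gauge_of_convolution h₁, mul_assoc c₁,
          integral_const_mul]
    _ = c₁ * c₁ * c₂ * ∫ X₁, p (X₁⁻¹ * (G₁ * G₂ * (G₃⁻¹ * G₄⁻¹)) * X₁) ∂μ := by
        simp_rw [integral_gauge_mul_gauge_of_convolution h₂, integral_const_mul, mul_assoc]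
    _ = c₁ ^ 2 * c₂ * p (G₁ * G₂ * G₃⁻¹ * G₄⁻¹) := by
        simp_rw [apply_inv_mul_mul_self_of_central hpcentral, integral_const, probReal_univ,
          one_smul, mul_assoc]
        ring

/-- If the continuous central functions `p′, p″, p` on a compact group `G` satisfy the
convolution proportionality relations (condition (5.6) of the paper)
`∫ p′(aX) p′(X⁻¹b) dμ(X) = c₁ p″(ab)` and `∫ p″(aX) p″(X⁻¹b) dμ(X) = c₂ p(ab)`,
then the four-variable plaquette-subdivision integral of `p′` equals
`c₁² c₂ · p(G₁G₂G₃⁻¹G₄⁻¹)`; hence an interaction measure exists on the projective limit. -/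
theorem plaquette_subdivision_convolution_identity
    {G : Type*} [Group G] [TopologicalSpace G] [IsTopologicalGroup G] [CompactSpace G]
    [MeasurableSpace G] [BorelSpace G]
    (μ : Measure G) [μ.IsHaarMeasure] [IsProbabilityMeasure μ]
    (p' p'' p : G → ℝ)
    (hp'cont : Continuous p') (hp''cont : Continuous p'') (hpcont : Continuous p)
    (hp'central : ∀ x y : G, p' (x * y) = p' (y * x))
    (hp''central : ∀ x y : G, p'' (x * y) = p'' (y * x))
    (hpcentral : ∀ x y : G, p (x * y) = p (y * x))
    (c₁ c₂ : ℝ) (hc₁ : 0 < c₁) (hc₂ : 0 < c₂)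
    (h₁ : ∀ a b : G, ∫ X, p' (a * X) * p' (X⁻¹ * b) ∂μ = c₁ * p'' (a * b))
    (h₂ : ∀ a b : G, ∫ X, p'' (a * X) * p'' (X⁻¹ * b) ∂μ = c₂ * p (a * b))
    (G₁ G₂ G₃ G₄ : G) :
    (∫ X₁, ∫ X₂, ∫ X₃, ∫ X₄,
        p' (X₁⁻¹ * G₁ * X₂) * p' (X₂⁻¹ * G₂ * X₃) * p' (X₃⁻¹ * G₃⁻¹ * X₄) *
          p' (X₄⁻¹ * G₄⁻¹ * X₁) ∂μ ∂μ ∂μ ∂μ) =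
      c₁ ^ 2 * c₂ * p (G₁ * G₂ * G₃⁻¹ * G₄⁻¹) :=
  plaquette_subdivision_convolution_identity_general μ p' p'' p hp'cont hp''cont hpcentral c₁ c₂ h₁
    h₂ G₁ G₂ G₃ G₄
end

section
/- Let G be a compact topological group with normalized Haar probability measure μ_H, let Λ be a countable index set, let (χ_λ)_{λ∈Λ} be continuous class functions χ_λ : G → ℂ (i.e. χ_λ(xy) = χ_λ(yx) for all x, y), let (d_λ)_{λ∈Λ} be positive reals with |χ_λ(g)| ≤ d_λ for all g ∈ G, satisfying the Schur orthogonality relations ∫_G χ_λ(g₁ x) χ_μ(x⁻¹ g₂) dμ_H(x) = δ_{λμ} · d_λ⁻¹ · χ_λ(g₁ g₂) for all λ, μ ∈ Λ and g₁, g₂ ∈ G, and let (c_λ)_{λ∈Λ} be reals with Σ_{λ∈Λ} d_λ² e^{−c_λ s} < ∞ for every s > 0. Define the heat-kernel density K(g, s) := Σ_{λ∈Λ} d_λ e^{−c_λ s} χ_λ(g). Then for all s, t > 0 and all g₁, g₂ ∈ G, ∫_G K(g₁ x, s) · K(x⁻¹ g₂, t) dμ_H(x) = K(g₁ g₂, s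 + t). -/
/-!
Expand both heat kernels as absolutely convergent series of characters and multiply them into a
double series over `Λ × Λ`. Since `|χ_λ| ≤ d_λ`, the terms are dominated by
`d_λ² e^{-c_λ s} · d_μ² e^{-c_μ t}`, which is summable, so the integral can be taken term by term.
Schur orthogonality kills the off-diagonal terms, and on the diagonal
`d_λ⁻¹ · d_λ e^{-c_λ s} · d_λ e^{-c_λ t} = d_λ e^{-c_λ (s + t)}`.
-/

open MeasureTheory

/-- The abstract heat-kernel density `K(g, s) = Σ_{λ∈Λ} d_λ e^{−c_λ s} χ_λ(g)` built from
characters `χ_λ`, dimensions `d_λ` and Laplacian eigenvalues `c_λ` of a compact group. -/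
noncomputable def heatKernel {Λ G : Type*} (d c : Λ → ℝ) (χ : Λ → G → ℂ)
    (g : G) (s : ℝ) : ℂ :=
  ∑' l : Λ, (d l : ℂ) * (Real.exp (-(c l) * s) : ℂ) * χ l g

theorem tsum_prod_ite_eq_diag {α M : Type*} [AddCommMonoid M] [TopologicalSpace M]
    [DecidableEq α] (f : α → M) :
    ∑' p : α × α, (if p.1 = p.2 then f p.1 else 0) = ∑' a, f a := by
  refine (Function.Injective.tsum_eq (g := fun a : α => (a, a))
    (fun a b h => congrArg Prod.fst h) ?_).symm.trans (by simp)
  rintro ⟨a, b⟩ hab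
  obtain rfl : a = b := by_contra fun h => hab (if_neg h)
  exact ⟨a, rfl⟩

theorem integral_tsum_of_norm_le_of_summable {ι α E : Type*} [Countable ι] [MeasurableSpace α]
    [NormedAddCommGroup E] [NormedSpace ℝ E] {μ : Measure α} [IsFiniteMeasure μ]
    {F : ι → α → E} {B : ι → ℝ} (hF : ∀ i, AEStronglyMeasurable (F i) μ)
    (hFB : ∀ i x, ‖F i x‖ ≤ B i) (hB : Summable B) :
    ∫ x, ∑' i, F i x ∂μ = ∑' i, ∫ x, F i x ∂μ := by
  have hint_norm_le : ∀ i, ∫ x, ‖F i x‖ ∂μ ≤ B i * μ.real Set.univ := fun i =>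
    (Real.le_norm_self _).trans
      (norm_integral_le_of_norm_le_const (Filter.Eventually.of_forall fun x => by
        simpa using hFB i x))
  refine (integral_tsum_of_summable_integral_norm
    (fun i => Integrable.of_bound (hF i) (B i) (Filter.Eventually.of_forall (hFB i)))
    ((hB.mul_right _).of_nonneg_of_le (fun i => integral_nonneg fun x => norm_nonneg _)
      hint_norm_le)).symm

section HeatKernel

variable {Λ G : Type*} (d c : Λ → ℝ) (χ : Λ → G → ℂ)

noncomputable def heatKernelTerm (l : Λ) (g : G) (s : ℝ) : ℂ :=
  (d l : ℂ) * (Real.exp (-(c l) * s) : ℂ) * χ l g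

theorem heatKernel_eq_tsum (g : G) (s : ℝ) :
    heatKernel d c χ g s = ∑' l, heatKernelTerm d c χ l g s := rfl

variable {d c χ}

theorem norm_heatKernelTerm_le (hbound : ∀ l g, ‖χ l g‖ ≤ d l) (l : Λ) (g : G) (s : ℝ) :
    ‖heatKernelTerm d c χ l g s‖ ≤ d l ^ 2 * Real.exp (-(c l) * s) := by
  have hd : 0 ≤ d l := (norm_nonneg _).trans (hbound l g)
  calc ‖heatKernelTerm d c χ l g s‖ = d l * Real.exp (-(c l) * s) * ‖χ l g‖ := by
        rw [heatKernelTerm, norm_mul, norm_mul, Complex.norm_real, Complex.norm_real,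
          Real.norm_of_nonneg hd, Real.norm_of_nonneg (Real.exp_pos _).le]
    _ ≤ d l * Real.exp (-(c l) * s) * d l := by gcongr; exact hbound l g
    _ = d l ^ 2 * Real.exp (-(c l) * s) := by ring

theorem summable_norm_heatKernelTerm (hbound : ∀ l g, ‖χ l g‖ ≤ d l) {s : ℝ}
    (hsum : Summable fun l => d l ^ 2 * Real.exp (-(c l) * s)) (g : G) :
    Summable fun l => ‖heatKernelTerm d c χ l g s‖ :=
  hsum.of_nonneg_of_le (fun _ => norm_nonneg _) (fun l => norm_heatKernelTerm_le hbound l g s)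

theorem norm_heatKernelTerm_mul_le (hbound : ∀ l g, ‖χ l g‖ ≤ d l) (l m : Λ) (a b : G)
    (s t : ℝ) :
    ‖heatKernelTerm d c χ l a s * heatKernelTerm d c χ m b t‖ ≤
      d l ^ 2 * Real.exp (-(c l) * s) * (d m ^ 2 * Real.exp (-(c m) * t)) :=
  (norm_mul_le _ _).trans (mul_le_mul (norm_heatKernelTerm_le hbound l a s)
    (norm_heatKernelTerm_le hbound m b t) (norm_nonneg _) (by positivity))

@[fun_prop]
theorem continuous_heatKernelTerm [TopologicalSpace G] {l : Λ} (hχ : Continuous (χ l)) (s : ℝ) :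
    Continuous fun g => heatKernelTerm d c χ l g s :=
  continuous_const.mul hχ

theorem integral_heatKernelTerm_mul_heatKernelTerm [Group G] [MeasurableSpace G] {μ : Measure G}
    [DecidableEq Λ] (hd : ∀ l, d l ≠ 0)
    (hschur : ∀ l m (g₁ g₂ : G),
      ∫ x, χ l (g₁ * x) * χ m (x⁻¹ * g₂) ∂μ =
        (if l = m then 1 else 0) * ((d l : ℂ))⁻¹ * χ l (g₁ * g₂))
    (l m : Λ) (g₁ g₂ : G) (s t : ℝ) :
    ∫ x, heatKernelTerm d c χ l (g₁ * x) s * heatKernelTerm d c χ m (x⁻¹ * g₂) t ∂μ =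
      if l = m then heatKernelTerm d c χ l (g₁ * g₂) (s + t) else 0 := by
  have hd_ne : (d l : ℂ) ≠ 0 := Complex.ofReal_ne_zero.mpr (hd l)
  simp only [heatKernelTerm, mul_mul_mul_comm _ (χ l _), integral_const_mul, hschur]
  split_ifs with hlm
  · subst hlm
    rw [mul_add, Real.exp_add, Complex.ofReal_mul]
    field_simp
  · simp

end HeatKernel

theorem heat_kernel_convolution_semigroup_general
    {G : Type*} [Group G] [TopologicalSpace G] [IsTopologicalGroup G]
    [MeasurableSpace G] [BorelSpace G]
    (μ : Measure G) [IsProbabilityMeasure μ]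
    {Λ : Type*} [Countable Λ] [DecidableEq Λ]
    (χ : Λ → G → ℂ) (d c : Λ → ℝ)
    (hχcont : ∀ l, Continuous (χ l))
    (hd : ∀ l, 0 < d l)
    (hbound : ∀ l (g : G), ‖χ l g‖ ≤ d l)
    (hschur : ∀ l m (g₁ g₂ : G),
      ∫ x, χ l (g₁ * x) * χ m (x⁻¹ * g₂) ∂μ =
        (if l = m then 1 else 0) * ((d l : ℂ))⁻¹ * χ l (g₁ * g₂))
    (hsum : ∀ s : ℝ, 0 < s → Summable fun l => (d l) ^ 2 * Real.exp (-(c l) * s))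
    (s t : ℝ) (hs : 0 < s) (ht : 0 < t) (g₁ g₂ : G) :
    ∫ x, heatKernel d c χ (g₁ * x) s * heatKernel d c χ (x⁻¹ * g₂) t ∂μ =
      heatKernel d c χ (g₁ * g₂) (s + t) := by
  set T := heatKernelTerm d c χ
  calc ∫ x, heatKernel d c χ (g₁ * x) s * heatKernel d c χ (x⁻¹ * g₂) t ∂μ
      = ∫ x, ∑' p : Λ × Λ, T p.1 (g₁ * x) s * T p.2 (x⁻¹ * g₂) t ∂μ := by
        simp only [heatKernel_eq_tsum, T, tsum_mul_tsum_of_summable_norm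
          (summable_norm_heatKernelTerm hbound (hsum s hs) _)
          (summable_norm_heatKernelTerm hbound (hsum t ht) _)]
    _ = ∑' p : Λ × Λ, ∫ x, T p.1 (g₁ * x) s * T p.2 (x⁻¹ * g₂) t ∂μ :=
        integral_tsum_of_norm_le_of_summable (fun p => by fun_prop)
          (fun p _ => norm_heatKernelTerm_mul_le hbound _ _ _ _ s t)
          ((hsum s hs).mul_of_nonneg (hsum t ht) (fun _ => by positivity) fun _ => by positivity)
    _ = ∑' p : Λ × Λ, if p.1 = p.2 then T p.1 (g₁ * g₂) (s + t) else 0 := by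
        simp only [T, integral_heatKernelTerm_mul_heatKernelTerm (fun l => (hd l).ne') hschur]
    _ = heatKernel d c χ (g₁ * g₂) (s + t) :=
        tsum_prod_ite_eq_diag fun l => T l (g₁ * g₂) (s + t)

/-- Convolution semigroup property of the heat-kernel density of a compact group: given
continuous class functions `χ_λ` bounded by `d_λ > 0` and satisfying Schur orthogonality,
and eigenvalues `c_λ` making `Σ d_λ² e^{−c_λ s}` summable for all `s > 0`,
`∫ K(g₁x, s) K(x⁻¹g₂, t) dμ(x) = K(g₁g₂, s + t)`. -/
theorem heat_kernel_convolution_semigroup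
    {G : Type*} [Group G] [TopologicalSpace G] [IsTopologicalGroup G] [CompactSpace G]
    [MeasurableSpace G] [BorelSpace G]
    (μ : Measure G) [μ.IsHaarMeasure] [IsProbabilityMeasure μ]
    {Λ : Type*} [Countable Λ] [DecidableEq Λ]
    (χ : Λ → G → ℂ) (d c : Λ → ℝ)
    (hχcont : ∀ l, Continuous (χ l))
    (hχclass : ∀ l (x y : G), χ l (x * y) = χ l (y * x))
    (hd : ∀ l, 0 < d l)
    (hbound : ∀ l (g : G), ‖χ l g‖ ≤ d l)
    (hschur : ∀ l m (g₁ g₂ : G),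
      ∫ x, χ l (g₁ * x) * χ m (x⁻¹ * g₂) ∂μ =
        (if l = m then 1 else 0) * ((d l : ℂ))⁻¹ * χ l (g₁ * g₂))
    (hsum : ∀ s : ℝ, 0 < s → Summable fun l => (d l) ^ 2 * Real.exp (-(c l) * s))
    (s t : ℝ) (hs : 0 < s) (ht : 0 < t) (g₁ g₂ : G) :
    ∫ x, heatKernel d c χ (g₁ * x) s * heatKernel d c χ (x⁻¹ * g₂) t ∂μ =
      heatKernel d c χ (g₁ * g₂) (s + t) :=
  heat_kernel_convolution_semigroup_general μ χ d c hχcont hd hbound hschur hsum s t hs ht g₁ g₂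
end

section
/- Let G be a compact topological group with normalized Haar probability measure μ_H, let Λ be a countable index set, let (χ_λ)_{λ∈Λ} be continuous class functions χ_λ : G → ℂ (i.e. χ_λ(xy) = χ_λ(yx) for all x, y), let (d_λ)_{λ∈Λ} be positive reals with |χ_λ(g)| ≤ d_λ for all g ∈ G, satisfying the Schur orthogonality relations ∫_G χ_λ(g₁ x) χ_μ(x⁻¹ g₂) dμ_H(x) = δ_{λμ} · d_λ⁻¹ · χ_λ(g₁ g₂) for all λ, μ ∈ Λ and g₁, g₂ ∈ G, and let (c_λ)_{λ∈Λ} be reals with Σ_{λ∈Λ} d_λ² e^{−c_λ s} < ∞ for every s > 0. Define K(g, s) := Σ_{λ∈Λ} d_λ e^{−c_λ s} χ_λ(g). Then for every β > 0 and all G₁, G₂, G₃, G₄ ∈ G, the subdivision consistency condition holds with the rescaling β ↦ β/4: ∫_{G⁴} K(X₁⁻¹ G₁ X₂, β/4) · K(X₂⁻¹ G₂ X₃, β/4) · K(X₃⁻¹ G₃⁻¹ X₄, β/4) · K(X₄⁻¹ G₄⁻¹ X₁, β/4) dμ_H(X₁) dμ_H(X₂) dμ_H(X₃) dμ_H(X₄)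 = K(G₁ G₂ G₃⁻¹ G₄⁻¹, β). (Hence, using the heat kernel as plaquette density with β_k = c/4^k at lattice refinement level k, a consistent interaction measure exists on the projective limit of the gauge theory with compact structure group G.) -/
/-!
Expanding both kernels in characters, Schur orthogonality makes the integral over a link
variable diagonal in `λ`, which gives the semigroup law
`∫ K(a x, s) K(x⁻¹ b, t) dμ(x) = K(a b, s + t)`; exchanging the integral with the double series
is justified by the bound `‖d_λ e^{-c_λ s} χ_λ‖ ≤ d_λ² e^{-c_λ s}`. Integrating out `X₄`, `X₃`,
`X₂` in turn glues the four edge kernels into `K(X₁⁻¹ G₁G₂G₃⁻¹G₄⁻¹ X₁, β)`, which does not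
depend on `X₁` because `K` is a class function.
-/

open MeasureTheory

theorem integral_tsum_mul_tsum {α ι κ R : Type*} [MeasurableSpace α] {μ : Measure α}
    [IsFiniteMeasure μ] [Countable ι] [Countable κ]
    [NormedRing R] [NormedSpace ℝ R] [CompleteSpace R]
    {f : ι → α → R} {g : κ → α → R} {F : ι → ℝ} {H : κ → ℝ}
    (hf : ∀ i, AEStronglyMeasurable (f i) μ) (hg : ∀ j, AEStronglyMeasurable (g j) μ)
    (hfF : ∀ i x, ‖f i x‖ ≤ F i) (hgH : ∀ j x, ‖g j x‖ ≤ H j)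
    (hF : Summable F) (hH : Summable H) :
    ∫ x, (∑' i, f i x) * (∑' j, g j x) ∂μ = ∑' i, ∑' j, ∫ x, f i x * g j x ∂μ := by
  have hprod_le : ∀ (p : ι × κ) x, ‖f p.1 x * g p.2 x‖ ≤ |F p.1| * |H p.2| := fun p x =>
    (norm_mul_le _ _).trans <| mul_le_mul ((hfF _ x).trans (le_abs_self _))
      ((hgH _ x).trans (le_abs_self _)) (norm_nonneg _) (abs_nonneg _)
  have hint : ∀ p : ι × κ, Integrable (fun x => f p.1 x * g p.2 x) μ := fun p =>
    .of_bound ((hf p.1).mul (hg p.2)) _ (.of_forall (hprod_le p))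
  have hint_norm_le : ∀ p : ι × κ,
      ∫ x, ‖f p.1 x * g p.2 x‖ ∂μ ≤ μ.real Set.univ * (|F p.1| * |H p.2|) := fun p => by
    simpa using integral_mono (hint p).norm (integrable_const _) (hprod_le p)
  have hsum_int_norm : Summable fun p : ι × κ => ∫ x, ‖f p.1 x * g p.2 x‖ ∂μ :=
    .of_nonneg_of_le (fun _ => integral_nonneg fun _ => norm_nonneg _) hint_norm_le
      ((hF.abs.mul_of_nonneg hH.abs (fun _ => abs_nonneg _) (fun _ => abs_nonneg _)).mul_left _)
  have hsum_int : Summable fun p : ι × κ => ∫ x, f p.1 x * g p.2 x ∂μ :=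
    .of_norm_bounded hsum_int_norm fun _ => norm_integral_le_integral_norm _
  calc ∫ x, (∑' i, f i x) * (∑' j, g j x) ∂μ
      = ∫ x, ∑' p : ι × κ, f p.1 x * g p.2 x ∂μ := by
        congr with x
        exact tsum_mul_tsum_of_summable_norm
          (.of_nonneg_of_le (fun _ => norm_nonneg _) (hfF · x) hF)
          (.of_nonneg_of_le (fun _ => norm_nonneg _) (hgH · x) hH)
    _ = ∑' p : ι × κ, ∫ x, f p.1 x * g p.2 x ∂μ :=
        (integral_tsum_of_summable_integral_norm hint hsum_int_norm).symm
    _ = ∑' i, ∑' j, ∫ x, f i x * g j x ∂μ := hsum_int.tsum_prod' hsum_int.prod_factor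

section HeatKernel

variable {G Λ : Type*} {χ : Λ → G → ℂ} {d c : Λ → ℝ}

lemma norm_heatKernel_term_le {l : Λ} {g : G} (hd : 0 ≤ d l) (hχ : ‖χ l g‖ ≤ d l) (s : ℝ) :
    ‖(d l : ℂ) * (Real.exp (-(c l) * s) : ℂ) * χ l g‖ ≤ d l ^ 2 * Real.exp (-(c l) * s) := by
  rw [norm_mul, norm_mul, Complex.norm_real, Complex.norm_real, Real.norm_of_nonneg hd,
    Real.norm_of_nonneg (Real.exp_nonneg _)]
  calc d l * Real.exp (-(c l) * s) * ‖χ l g‖ ≤ d l * Real.exp (-(c l) * s) * d l := by gcongr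
    _ = d l ^ 2 * Real.exp (-(c l) * s) := by ring

variable [Group G]

lemma heatKernel_conj (hχclass : ∀ l (x y : G), χ l (x * y) = χ l (y * x)) (x g : G) (s : ℝ) :
    heatKernel d c χ (x⁻¹ * g * x) s = heatKernel d c χ g s := by
  refine tsum_congr fun l => ?_
  rw [mul_assoc x⁻¹, hχclass, mul_inv_cancel_right]

variable [TopologicalSpace G] [IsTopologicalGroup G] [MeasurableSpace G] [OpensMeasurableSpace G]
  {μ : Measure G} [IsFiniteMeasure μ] [Countable Λ] [DecidableEq Λ]

theorem integral_heatKernel_mul_heatKernel (hχcont : ∀ l, Continuous (χ l))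
    (hd : ∀ l, 0 < d l) (hbound : ∀ l g, ‖χ l g‖ ≤ d l)
    (hschur : ∀ l m (g₁ g₂ : G),
      ∫ x, χ l (g₁ * x) * χ m (x⁻¹ * g₂) ∂μ =
        (if l = m then 1 else 0) * ((d l : ℂ))⁻¹ * χ l (g₁ * g₂))
    {s t : ℝ} (hs : Summable fun l => d l ^ 2 * Real.exp (-(c l) * s))
    (ht : Summable fun l => d l ^ 2 * Real.exp (-(c l) * t)) (a b : G) :
    ∫ x, heatKernel d c χ (a * x) s * heatKernel d c χ (x⁻¹ * b) t ∂μ =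
      heatKernel d c χ (a * b) (s + t) := by
  have hterm : ∀ l m, ∫ x, (d l : ℂ) * (Real.exp (-(c l) * s) : ℂ) * χ l (a * x) *
        ((d m : ℂ) * (Real.exp (-(c m) * t) : ℂ) * χ m (x⁻¹ * b)) ∂μ =
      if m = l then (d l : ℂ) * (Real.exp (-(c l) * (s + t)) : ℂ) * χ l (a * b) else 0 := by
    intro l m
    simp_rw [mul_mul_mul_comm _ (χ l _)]
    rw [integral_const_mul, hschur]
    by_cases h : m = l
    · subst h
      rw [if_pos rfl, if_pos rfl, mul_add, Real.exp_add, Complex.ofReal_mul]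
      field_simp [(hd m).ne']
    · rw [if_neg (Ne.symm h), if_neg h, zero_mul, zero_mul, mul_zero]
  unfold heatKernel
  rw [integral_tsum_mul_tsum
    (fun l => (by have := hχcont l; fun_prop : Continuous fun x => χ l (a * x))
      |>.aestronglyMeasurable.const_mul _)
    (fun m => (by have := hχcont m; fun_prop : Continuous fun x => χ m (x⁻¹ * b))
      |>.aestronglyMeasurable.const_mul _)
    (fun l x => norm_heatKernel_term_le (hd l).le (hbound l _) s)
    (fun m x => norm_heatKernel_term_le (hd m).le (hbound m _) t) hs ht]
  simp_rw [hterm, tsum_ite_eq]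

theorem integral_heatKernel_mul_heatKernel_link (hχcont : ∀ l, Continuous (χ l))
    (hd : ∀ l, 0 < d l) (hbound : ∀ l g, ‖χ l g‖ ≤ d l)
    (hschur : ∀ l m (g₁ g₂ : G),
      ∫ x, χ l (g₁ * x) * χ m (x⁻¹ * g₂) ∂μ =
        (if l = m then 1 else 0) * ((d l : ℂ))⁻¹ * χ l (g₁ * g₂))
    {s t : ℝ} (hs : Summable fun l => d l ^ 2 * Real.exp (-(c l) * s))
    (ht : Summable fun l => d l ^ 2 * Real.exp (-(c l) * t)) (y g h z : G) :
    ∫ x, heatKernel d c χ (y⁻¹ * g * x) s * heatKernel d c χ (x⁻¹ * h * z) t ∂μ =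
      heatKernel d c χ (y⁻¹ * (g * h) * z) (s + t) := by
  simp_rw [mul_assoc _ h z]
  rw [integral_heatKernel_mul_heatKernel hχcont hd hbound hschur hs ht]
  simp only [mul_assoc]

end HeatKernel

theorem heat_kernel_plaquette_subdivision_consistency_general
    {G : Type*} [Group G] [TopologicalSpace G] [IsTopologicalGroup G]
    [MeasurableSpace G] [BorelSpace G]
    (μ : Measure G) [IsProbabilityMeasure μ]
    {Λ : Type*} [Countable Λ] [DecidableEq Λ]
    (χ : Λ → G → ℂ) (d c : Λ → ℝ)
    (hχcont : ∀ l, Continuous (χ l))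
    (hχclass : ∀ l (x y : G), χ l (x * y) = χ l (y * x))
    (hd : ∀ l, 0 < d l)
    (hbound : ∀ l (g : G), ‖χ l g‖ ≤ d l)
    (hschur : ∀ l m (g₁ g₂ : G),
      ∫ x, χ l (g₁ * x) * χ m (x⁻¹ * g₂) ∂μ =
        (if l = m then 1 else 0) * ((d l : ℂ))⁻¹ * χ l (g₁ * g₂))
    (hsum : ∀ s : ℝ, 0 < s → Summable fun l => (d l) ^ 2 * Real.exp (-(c l) * s))
    (β : ℝ) (hβ : 0 < β) (G₁ G₂ G₃ G₄ : G) :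
    (∫ X₁, ∫ X₂, ∫ X₃, ∫ X₄,
        heatKernel d c χ (X₁⁻¹ * G₁ * X₂) (β / 4) *
          heatKernel d c χ (X₂⁻¹ * G₂ * X₃) (β / 4) *
          heatKernel d c χ (X₃⁻¹ * G₃⁻¹ * X₄) (β / 4) *
          heatKernel d c χ (X₄⁻¹ * G₄⁻¹ * X₁) (β / 4) ∂μ ∂μ ∂μ ∂μ) =
      heatKernel d c χ (G₁ * G₂ * G₃⁻¹ * G₄⁻¹) β := by
  have glue := fun {s t : ℝ} (hs : 0 < s) (ht : 0 < t) =>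
    integral_heatKernel_mul_heatKernel_link hχcont hd hbound hschur (hsum s hs) (hsum t ht)
  have hq : 0 < β / 4 := by positivity
  have hX₄ : ∀ X₁ X₂ X₃, ∫ X₄,
      heatKernel d c χ (X₁⁻¹ * G₁ * X₂) (β / 4) * heatKernel d c χ (X₂⁻¹ * G₂ * X₃) (β / 4) *
        heatKernel d c χ (X₃⁻¹ * G₃⁻¹ * X₄) (β / 4) *
        heatKernel d c χ (X₄⁻¹ * G₄⁻¹ * X₁) (β / 4) ∂μ =
      heatKernel d c χ (X₁⁻¹ * G₁ * X₂) (β / 4) * heatKernel d c χ (X₂⁻¹ * G₂ * X₃) (β / 4) *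
        heatKernel d c χ (X₃⁻¹ * (G₃⁻¹ * G₄⁻¹) * X₁) (β / 4 + β / 4) := fun X₁ X₂ X₃ => by
    simp_rw [mul_assoc (heatKernel d c χ _ _ * heatKernel d c χ _ _)]
    rw [integral_const_mul, glue hq hq]
  have hX₃ : ∀ X₁ X₂, ∫ X₃,
      heatKernel d c χ (X₁⁻¹ * G₁ * X₂) (β / 4) * heatKernel d c χ (X₂⁻¹ * G₂ * X₃) (β / 4) *
        heatKernel d c χ (X₃⁻¹ * (G₃⁻¹ * G₄⁻¹) * X₁) (β / 4 + β / 4) ∂μ =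
      heatKernel d c χ (X₁⁻¹ * G₁ * X₂) (β / 4) *
        heatKernel d c χ (X₂⁻¹ * (G₂ * (G₃⁻¹ * G₄⁻¹)) * X₁) (β / 4 + (β / 4 + β / 4)) :=
      fun X₁ X₂ => by
    simp_rw [mul_assoc (heatKernel d c χ _ _)]
    rw [integral_const_mul, glue hq (by positivity)]
  have hX₂ : ∀ X₁, ∫ X₂, heatKernel d c χ (X₁⁻¹ * G₁ * X₂) (β / 4) *
        heatKernel d c χ (X₂⁻¹ * (G₂ * (G₃⁻¹ * G₄⁻¹)) * X₁) (β / 4 + (β / 4 + β / 4)) ∂μ =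
      heatKernel d c χ (G₁ * G₂ * G₃⁻¹ * G₄⁻¹) β := fun X₁ => by
    rw [glue hq (by positivity), heatKernel_conj hχclass]
    congr 1 <;> [group; ring]
  simp only [hX₄, hX₃, hX₂, integral_const, probReal_univ, one_smul]

/-- Subdivision consistency for the heat-kernel interaction measure on a compact group:
with the rescaling `β ↦ β/4`, integrating the heat-kernel densities over the four internal
link variables of a subdivided plaquette reproduces the heat-kernel density at inverse
temperature `β` on the plaquette holonomy `G₁G₂G₃⁻¹G₄⁻¹`. -/
theorem heat_kernel_plaquette_subdivision_consistency
    {G : Type*} [Group G] [TopologicalSpace G] [IsTopologicalGroup G] [CompactSpace G]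
    [MeasurableSpace G] [BorelSpace G]
    (μ : Measure G) [μ.IsHaarMeasure] [IsProbabilityMeasure μ]
    {Λ : Type*} [Countable Λ] [DecidableEq Λ]
    (χ : Λ → G → ℂ) (d c : Λ → ℝ)
    (hχcont : ∀ l, Continuous (χ l))
    (hχclass : ∀ l (x y : G), χ l (x * y) = χ l (y * x))
    (hd : ∀ l, 0 < d l)
    (hbound : ∀ l (g : G), ‖χ l g‖ ≤ d l)
    (hschur : ∀ l m (g₁ g₂ : G),
      ∫ x, χ l (g₁ * x) * χ m (x⁻¹ * g₂) ∂μ =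
        (if l = m then 1 else 0) * ((d l : ℂ))⁻¹ * χ l (g₁ * g₂))
    (hsum : ∀ s : ℝ, 0 < s → Summable fun l => (d l) ^ 2 * Real.exp (-(c l) * s))
    (β : ℝ) (hβ : 0 < β) (G₁ G₂ G₃ G₄ : G) :
    (∫ X₁, ∫ X₂, ∫ X₃, ∫ X₄,
        heatKernel d c χ (X₁⁻¹ * G₁ * X₂) (β / 4) *
          heatKernel d c χ (X₂⁻¹ * G₂ * X₃) (β / 4) *
          heatKernel d c χ (X₃⁻¹ * G₃⁻¹ * X₄) (β / 4) *
          heatKernel d c χ (X₄⁻¹ * G₄⁻¹ * X₁) (β / 4) ∂μ ∂μ ∂μ ∂μ) =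
      heatKernel d c χ (G₁ * G₂ * G₃⁻¹ * G₄⁻¹) β :=
  heat_kernel_plaquette_subdivision_consistency_general μ χ d c hχcont hχclass hd hbound hschur hsum
    β hβ G₁ G₂ G₃ G₄
end

section
/- For every β > 0 and every x ∈ ℝ, the SU(2) heat kernel character sum admits the Poisson-resummed (Jacobi-transformed) form: Σ_{m=1}^{∞} m · e^{−(m²−1)β/8} · sin(mπx) = 2(2π)^{3/2} · e^{β/8} · β^{−3/2} · Σ_{n∈ℤ} (x + 2n) · exp(−2π²(x + 2n)²/β). (With m = 2λ + 1 running over positive integers as λ runs over the highest weights 0, 1/2, 1, 3/2, … of SU(2), and after multiplying through by sin(πx), this is the identity between the spectral expansion K₂(g, β) = Σ_λ (2λ+1) e^{−λ(λ+1)β/2} sin((2λ+1)πx(g))/sin(πx(g)) and its Gaussian-sum form.) -/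
/-!
With `a = x / 2`, the character sum is `e^{β/8} / 2` times the sine kernel
`Σ_{n ≥ 1} 2n sin(2πan) e^{-πn²t}` at `t = β/(8π)`, while the Gaussian sum is twice the odd
Hurwitz kernel `Σ_{n ∈ ℤ} (n + a) e^{-π(n+a)²s}` at `s = 8π/β = 1/t`. The Jacobi transformation
of the theta function, in the form `oddKernel_functional_equation`, relates the two kernels.
-/

open Real HurwitzZeta

lemma sinKernel_one_div {s : ℝ} (a : UnitAddCircle) (hs : 0 < s) :
    sinKernel a (1 / s) = s ^ (3 / 2 : ℝ) * oddKernel a s := by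
  rw [oddKernel_functional_equation, ← mul_assoc, mul_one_div_cancel (by positivity), one_mul]

lemma four_mul_rpow_three_halves {c : ℝ} (hc : 0 ≤ c) :
    (4 * c) ^ (3 / 2 : ℝ) = 8 * c ^ (3 / 2 : ℝ) := by
  rw [mul_rpow (by norm_num) hc, show (4 : ℝ) = 2 ^ (2 : ℝ) by norm_num, ← rpow_mul (by norm_num)]
  norm_num

lemma tsum_pnat_mul_exp_mul_sin_eq_sinKernel (β x : ℝ) (hβ : 0 < β) :
    ∑' m : ℕ+, (m : ℝ) * exp (-(((m : ℝ) ^ 2 - 1) * β / 8)) * sin (m * π * x) =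
      exp (β / 8) / 2 * sinKernel ↑(x / 2) (β / (8 * π)) := by
  rw [tsum_pnat_eq_tsum_of_eq_zero
      (f := fun m : ℕ ↦ (m : ℝ) * exp (-(((m : ℝ) ^ 2 - 1) * β / 8)) * sin (m * π * x)) (by simp),
    ← (hasSum_nat_sinKernel (x / 2) (by positivity)).tsum_eq, ← tsum_mul_left]
  refine tsum_congr fun n ↦ ?_
  rw [show -(((n : ℝ) ^ 2 - 1) * β / 8) = β / 8 + -π * n ^ 2 * (β / (8 * π)) by
    field_simp; ring, exp_add, show 2 * π * (x / 2) * n = n * π * x by ring]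
  ring

lemma tsum_int_mul_gaussian_eq_oddKernel (β x : ℝ) (hβ : 0 < β) :
    ∑' n : ℤ, (x + 2 * (n : ℝ)) * exp (-(2 * π ^ 2 * (x + 2 * (n : ℝ)) ^ 2 / β)) =
      2 * oddKernel ↑(x / 2) (8 * π / β) := by
  rw [← (hasSum_int_oddKernel (x / 2) (by positivity)).tsum_eq, ← tsum_mul_left]
  refine tsum_congr fun n ↦ ?_
  rw [show -(2 * π ^ 2 * (x + 2 * (n : ℝ)) ^ 2 / β) = -π * (n + x / 2) ^ 2 * (8 * π / β) by
    field_simp; ring]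
  ring

/-- Poisson-resummed (Jacobi-transformed) form of the `SU(2)` heat kernel character sum:
`Σ_{m=1}^∞ m e^{−(m²−1)β/8} sin(mπx) = 2(2π)^{3/2} e^{β/8} β^{−3/2} Σ_{n∈ℤ} (x+2n) e^{−2π²(x+2n)²/β}`,
where `m = 2λ + 1` runs over the positive integers as `λ` runs over the highest weights of
`SU(2)`. -/
theorem su2_heat_kernel_poisson_resummation (β : ℝ) (hβ : 0 < β) (x : ℝ) :
    ∑' m : ℕ+, (m : ℝ) * Real.exp (-(((m : ℝ) ^ 2 - 1) * β / 8)) * Real.sin (m * Real.pi * x) =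
      2 * (2 * Real.pi) ^ ((3 : ℝ) / 2) * Real.exp (β / 8) / β ^ ((3 : ℝ) / 2) *
        ∑' n : ℤ, (x + 2 * (n : ℝ)) * Real.exp (-(2 * Real.pi ^ 2 * (x + 2 * (n : ℝ)) ^ 2 / β)) := by
  have hs : 0 < 8 * π / β := by positivity
  have hs_rpow : (8 * π / β) ^ (3 / 2 : ℝ) = 8 * (2 * π) ^ (3 / 2 : ℝ) / β ^ (3 / 2 : ℝ) := by
    rw [div_rpow (by positivity) hβ.le, show 8 * π = 4 * (2 * π) by ring,
      four_mul_rpow_three_halves (by positivity)]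
  rw [tsum_pnat_mul_exp_mul_sin_eq_sinKernel β x hβ, tsum_int_mul_gaussian_eq_oddKernel β x hβ,
    ← one_div_div (8 * π) β, sinKernel_one_div _ hs, hs_rpow]
  ring
end

section
/- Let G = SU(2) be the group of 2×2 complex special unitary matrices. If a subgroup H ≤ G is the centralizer of some subset S ⊆ G (i.e. H = {h ∈ G : hs = sh for all s ∈ S}), then exactly one of the following holds: H = G; or H is conjugate in G to the diagonal maximal torus T = {diag(z, z̄) : z ∈ ℂ, |z| = 1}; or H is the center Z(G) = {I, −I}. (Hence SU(2) has exactly three conjugacy classes of Howe subgroups, corresponding to the three strata of the SU(2) gauge theory: the generic stratum with isotropy group ℤ₂, the U(1)-reducible stratum, and the stratum with isotropy group SU(2).) -/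
/-!
Every `g ∈ SU(2)` is conjugate in `SU(2)` into the diagonal torus `T`: if `v` is a unit eigenvector
of `g`, then `(-v̄₁, v̄₀)` is an eigenvector too, and the two are the columns of a matrix in
`SU(2)`. A non-central `diag(a, ā)` (i.e. `a ∉ ℝ`) commutes only with diagonal matrices, so the
centralizer of a non-central element of `γTγ⁻¹` is `γTγ⁻¹`.

If `S` is central, `Z(S) = SU(2)`. Otherwise pick a non-central `s ∈ S ∩ γTγ⁻¹`, so that
`Z(S) ⊆ Z(s) = γTγ⁻¹`. Either `Z(S)` is central, or it contains a non-central `h ∈ γTγ⁻¹`, and then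
`S ⊆ Z(h) = γTγ⁻¹`, whence `γTγ⁻¹ ⊆ Z(S)` because the torus is abelian. The three cases exclude
each other because `SU(2)` is not abelian and no conjugate of `T` is central.
-/

open Matrix

/-- The underlying set of `SU(2)`, the group of `2×2` complex special unitary matrices. -/
def SU2 : Set (Matrix (Fin 2) (Fin 2) ℂ) :=
  {g | g ∈ Matrix.specialUnitaryGroup (Fin 2) ℂ}

/-- The diagonal maximal torus `T = {diag(z, z̄) : z ∈ ℂ, |z| = 1}` of `SU(2)`. -/
def SU2Torus : Set (Matrix (Fin 2) (Fin 2) ℂ) :=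
  {g | ∃ z : ℂ, ‖z‖ = 1 ∧ g = Matrix.diagonal ![z, (starRingEnd ℂ) z]}

open ComplexConjugate

namespace Matrix

variable {n R : Type*} [Fintype n] [DecidableEq n] [CommRing R]

@[simps apply symm_apply]
noncomputable def conjMulEquiv (γ : Matrix n n R) (hγ : IsUnit γ.det) :
    Matrix n n R ≃* Matrix n n R where
  toFun x := γ * x * γ⁻¹
  invFun x := γ⁻¹ * x * γ
  left_inv x := by simp [mul_assoc, hγ]
  right_inv x := by simp [mul_assoc, hγ]
  map_mul' x y := by simp [mul_assoc, hγ]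

lemma conjMulEquiv_neg_one (γ : Matrix n n R) (hγ : IsUnit γ.det) :
    conjMulEquiv γ hγ (-1) = -1 := by
  simp [hγ]

lemma exists_unit_eigenvector [Nonempty n] (g : Matrix n n ℂ) :
    ∃ (μ : ℂ) (v : n → ℂ), g *ᵥ v = μ • v ∧ ∑ i, ‖v i‖ ^ 2 = 1 := by
  obtain ⟨μ, hμ⟩ := Module.End.exists_eigenvalue (toLin' g)
  obtain ⟨w, hw, hw0⟩ := hμ.exists_hasEigenvector
  rw [Module.End.mem_eigenspace_iff, toLin'_apply] at hw
  set x : EuclideanSpace ℂ n := WithLp.toLp 2 w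
  have hx : x ≠ 0 := by simpa [x] using hw0
  refine ⟨μ, ((‖x‖⁻¹ : ℝ) : ℂ) • w, by rw [mulVec_smul, hw, smul_comm], ?_⟩
  have := norm_smul_inv_norm (𝕜 := ℂ) hx
  rw [EuclideanSpace.norm_eq, Real.sqrt_eq_one] at this
  simpa [x] using this

end Matrix

local notation "M₂" => Matrix (Fin 2) (Fin 2) ℂ

section SU2

variable {g h : M₂}

lemma det_of_mem_SU2 (hg : g ∈ SU2) : g.det = 1 := hg.2

lemma isUnit_det_of_mem_SU2 (hg : g ∈ SU2) : IsUnit g.det := by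
  rw [det_of_mem_SU2 hg]; exact isUnit_one

lemma inv_eq_star_of_mem_SU2 (hg : g ∈ SU2) : g⁻¹ = star g :=
  inv_eq_left_inv (mem_unitaryGroup_iff'.mp hg.1)

lemma mul_mem_SU2 (hg : g ∈ SU2) (hh : h ∈ SU2) : g * h ∈ SU2 :=
  (specialUnitaryGroup (Fin 2) ℂ).mul_mem hg hh

lemma inv_mem_SU2 (hg : g ∈ SU2) : g⁻¹ ∈ SU2 := by
  rw [inv_eq_star_of_mem_SU2 hg]
  exact (star (⟨g, hg⟩ : specialUnitaryGroup (Fin 2) ℂ)).2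

lemma star_eq_adjugate_of_mem_SU2 (hg : g ∈ SU2) : star g = adjugate g := by
  rw [← inv_eq_star_of_mem_SU2 hg, inv_def, det_of_mem_SU2 hg, Ring.inverse_one, one_smul]

lemma of_mem_SU2_iff {a b c d : ℂ} :
    !![a, b; c, d] ∈ SU2 ↔ d = conj a ∧ c = -conj b ∧ ‖a‖ ^ 2 + ‖b‖ ^ 2 = 1 := by
  constructor
  · intro hg
    have hadj := star_eq_adjugate_of_mem_SU2 hg
    rw [adjugate_fin_two_of] at hadj
    have hd : conj a = d := by simpa using congrFun₂ hadj 0 0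
    have hc : c = -conj b := neg_eq_iff_eq_neg.1 (by simpa using (congrFun₂ hadj 1 0).symm)
    have hdet := det_of_mem_SU2 hg
    rw [det_fin_two_of, ← hd, hc] at hdet
    refine ⟨hd.symm, hc, ?_⟩
    exact_mod_cast (by linear_combination hdet - Complex.mul_conj' a - Complex.mul_conj' b :
      (‖a‖ ^ 2 + ‖b‖ ^ 2 : ℂ) = 1)
  · rintro ⟨rfl, rfl, hab⟩
    have hab' : a * conj a + b * conj b = 1 := by
      rw [Complex.mul_conj', Complex.mul_conj']; exact_mod_cast hab
    have hstar : star !![a, b; -conj b, conj a] = !![conj a, -b; conj b, a] := by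
      ext i j; fin_cases i <;> fin_cases j <;> simp
    refine mem_specialUnitaryGroup_iff.2 ⟨?_, by rw [det_fin_two_of]; linear_combination hab'⟩
    rw [mem_unitaryGroup_iff, hstar, mul_fin_two, one_fin_two]
    simp only [EmbeddingLike.apply_eq_iff_eq, vecCons_inj, and_true]
    exact ⟨⟨hab', by ring⟩, by ring, by linear_combination hab'⟩

lemma mem_SU2_iff : g ∈ SU2 ↔
    g 1 1 = conj (g 0 0) ∧ g 1 0 = -conj (g 0 1) ∧ ‖g 0 0‖ ^ 2 + ‖g 0 1‖ ^ 2 = 1 := by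
  rw [← g.etaExpand_eq]
  exact of_mem_SU2_iff

lemma mem_SU2Torus_iff : g ∈ SU2Torus ↔ g ∈ SU2 ∧ g 0 1 = 0 := by
  constructor
  · rintro ⟨z, hz, rfl⟩
    simp [mem_SU2_iff, hz]
  · rintro ⟨hg, hg01⟩
    obtain ⟨hg11, hg10, hnorm⟩ := mem_SU2_iff.1 hg
    rw [hg01, norm_zero, zero_pow two_ne_zero, add_zero,
      pow_eq_one_iff_of_nonneg (norm_nonneg _) two_ne_zero] at hnorm
    refine ⟨g 0 0, hnorm, ?_⟩
    ext i j
    fin_cases i <;> fin_cases j <;> simp [hg01, hg10, hg11]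

lemma SU2Torus_subset_SU2 : SU2Torus ⊆ SU2 := fun _ hg => (mem_SU2Torus_iff.1 hg).1

lemma SU2Torus_mul_comm (hg : g ∈ SU2Torus) (hh : h ∈ SU2Torus) : g * h = h * g := by
  obtain ⟨z, -, rfl⟩ := hg
  obtain ⟨w, -, rfl⟩ := hh
  simp only [diagonal_mul_diagonal, mul_comm]

lemma mem_SU2Torus_of_commute {a : ℂ} (ha : conj a ≠ a) (hh : h ∈ SU2)
    (hc : h * diagonal ![a, conj a] = diagonal ![a, conj a] * h) : h ∈ SU2Torus := by
  refine mem_SU2Torus_iff.2 ⟨hh, ?_⟩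
  have h01 : h 0 1 * conj a = a * h 0 1 := by
    simpa [mul_diagonal, diagonal_mul] using congrFun₂ hc 0 1
  exact (mul_eq_zero.1 (by linear_combination h01 : h 0 1 * (conj a - a) = 0)).resolve_right
    (sub_ne_zero.2 ha)

end SU2

def SU2Center : Set M₂ := {g | g = 1 ∨ g = -1}

lemma eq_one_or_eq_neg_one_of_conj_eq {z : ℂ} (hz : ‖z‖ = 1) (h : conj z = z) :
    z = 1 ∨ z = -1 := by
  obtain ⟨r, rfl⟩ := Complex.conj_eq_iff_real.1 h
  rw [Complex.norm_real, Real.norm_eq_abs] at hz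
  rcases abs_eq zero_le_one |>.1 hz with rfl | rfl <;> simp

lemma diagonal_mem_SU2Center {z : ℂ} (hz : ‖z‖ = 1) (h : conj z = z) :
    diagonal ![z, conj z] ∈ SU2Center := by
  rcases eq_one_or_eq_neg_one_of_conj_eq hz h with rfl | rfl
  · left; ext i j; fin_cases i <;> fin_cases j <;> simp [one_apply]
  · right; ext i j; fin_cases i <;> fin_cases j <;> simp [one_apply]

lemma SU2Center_subset_SU2Torus : SU2Center ⊆ SU2Torus := by
  rintro g (rfl | rfl)
  · exact ⟨1, norm_one, by ext i j; fin_cases i <;> fin_cases j <;> simp [one_apply]⟩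
  · exact ⟨-1, by simp, by ext i j; fin_cases i <;> fin_cases j <;> simp⟩

lemma mul_comm_of_mem_SU2Center {s : M₂} (hs : s ∈ SU2Center) (h : M₂) : h * s = s * h := by
  rcases hs with rfl | rfl <;> simp

lemma conjMulEquiv_mem_SU2Center_iff {γ x : M₂} (hγ : IsUnit γ.det) :
    conjMulEquiv γ hγ x ∈ SU2Center ↔ x ∈ SU2Center := by
  have hneg := (conjMulEquiv γ hγ).injective.eq_iff (a := x) (b := -1)
  rw [conjMulEquiv_neg_one] at hneg
  simp only [SU2Center, Set.mem_ofPred_eq, map_eq_one_iff _ (conjMulEquiv γ hγ).injective, hneg]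

lemma diagonal_I_mem_SU2Torus : diagonal ![Complex.I, conj Complex.I] ∈ SU2Torus :=
  ⟨Complex.I, Complex.norm_I, rfl⟩

lemma diagonal_I_not_mem_SU2Center : diagonal ![Complex.I, conj Complex.I] ∉ SU2Center := by
  rintro (h | h) <;> simpa [Complex.ext_iff] using congrFun₂ h 0 0

lemma SU2_ne_SU2Center : SU2 ≠ SU2Center := fun h =>
  diagonal_I_not_mem_SU2Center (h ▸ SU2Torus_subset_SU2 diagonal_I_mem_SU2Torus)

lemma SU2_not_commutative : ∃ x ∈ SU2, ∃ y ∈ SU2, x * y ≠ y * x := by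
  refine ⟨diagonal ![Complex.I, conj Complex.I], SU2Torus_subset_SU2 diagonal_I_mem_SU2Torus,
    !![0, 1; -1, 0], of_mem_SU2_iff.2 ⟨by simp, by simp, by simp⟩, fun h => ?_⟩
  have h01 := congrFun₂ h 0 1
  norm_num [Complex.ext_iff] at h01

def conjTorus (γ : M₂) : Set M₂ := (fun x => γ * x * γ⁻¹) '' SU2Torus

section conjTorus

variable {γ g h : M₂} (hγ : γ ∈ SU2)
include hγ

lemma conjTorus_eq_image : conjTorus γ = conjMulEquiv γ (isUnit_det_of_mem_SU2 hγ) '' SU2Torus :=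
  rfl

lemma conjTorus_subset_SU2 : conjTorus γ ⊆ SU2 := by
  rintro _ ⟨t, ht, rfl⟩
  exact mul_mem_SU2 (mul_mem_SU2 hγ (SU2Torus_subset_SU2 ht)) (inv_mem_SU2 hγ)

lemma conjTorus_mul_comm (hg : g ∈ conjTorus γ) (hh : h ∈ conjTorus γ) : g * h = h * g := by
  rw [conjTorus_eq_image hγ] at hg hh
  obtain ⟨t, ht, rfl⟩ := hg
  obtain ⟨u, hu, rfl⟩ := hh
  rw [← map_mul, ← map_mul, SU2Torus_mul_comm ht hu]

lemma SU2_ne_conjTorus : SU2 ≠ conjTorus γ := by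
  intro h
  obtain ⟨x, hx, y, hy, hxy⟩ := SU2_not_commutative
  rw [h] at hx hy
  exact hxy (conjTorus_mul_comm hγ hx hy)

lemma conjTorus_ne_SU2Center : conjTorus γ ≠ SU2Center := by
  intro h
  rw [conjTorus_eq_image hγ] at h
  exact diagonal_I_not_mem_SU2Center
    ((conjMulEquiv_mem_SU2Center_iff _).1 (h.subset ⟨_, diagonal_I_mem_SU2Torus, rfl⟩))

lemma mem_conjTorus_of_commute (hg : g ∈ conjTorus γ) (hgc : g ∉ SU2Center) (hh : h ∈ SU2)
    (hc : h * g = g * h) : h ∈ conjTorus γ := by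
  rw [conjTorus_eq_image hγ] at hg ⊢
  set c := conjMulEquiv γ (isUnit_det_of_mem_SU2 hγ)
  obtain ⟨_, ⟨a, ha, rfl⟩, rfl⟩ := hg
  have hreg : conj a ≠ a := fun hconj =>
    hgc ((conjMulEquiv_mem_SU2Center_iff _).2 (diagonal_mem_SU2Center ha hconj))
  refine ⟨c.symm h, mem_SU2Torus_of_commute hreg ?_ ?_, c.apply_symm_apply h⟩
  · exact mul_mem_SU2 (mul_mem_SU2 (inv_mem_SU2 hγ) hh) hγ
  · apply c.injective
    rw [map_mul, map_mul, c.apply_symm_apply, hc]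

end conjTorus

lemma exists_mem_conjTorus {g : M₂} (hg : g ∈ SU2) : ∃ γ ∈ SU2, g ∈ conjTorus γ := by
  obtain ⟨μ, v, hv, hnorm⟩ := exists_unit_eigenvector g
  obtain ⟨hg11, hg10, -⟩ := mem_SU2_iff.1 hg
  set γ : M₂ := !![v 0, -conj (v 1); v 1, conj (v 0)]
  have hγ : γ ∈ SU2 := of_mem_SU2_iff.2 ⟨rfl, by simp, by simpa [Fin.sum_univ_two] using hnorm⟩
  have hv0 : g 0 0 * v 0 + g 0 1 * v 1 = μ * v 0 := by
    simpa [mulVec, dotProduct, Fin.sum_univ_two] using congrFun hv 0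
  have hv1 : -conj (g 0 1) * v 0 + conj (g 0 0) * v 1 = μ * v 1 := by
    simpa [mulVec, dotProduct, Fin.sum_univ_two, hg10, hg11] using congrFun hv 1
  have hv0' := congrArg conj hv0
  have hv1' := congrArg conj hv1
  simp only [map_add, map_mul, map_neg, Complex.conj_conj] at hv0' hv1'
  have hgγ : g * γ = γ * diagonal ![μ, conj μ] := by
    rw [eta_fin_two g, hg11, hg10, diagonal_fin_two, mul_fin_two, mul_fin_two]
    simp only [EmbeddingLike.apply_eq_iff_eq, vecCons_inj, cons_val_zero, cons_val_one, and_true]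
    exact ⟨⟨by linear_combination hv0, by linear_combination -hv1'⟩,
      by linear_combination hv1, by linear_combination hv0'⟩
  set c := conjMulEquiv γ (isUnit_det_of_mem_SU2 hγ)
  have hcg : c.symm g = diagonal ![μ, conj μ] := by
    rw [conjMulEquiv_symm_apply, mul_assoc, hgγ, ← mul_assoc,
      nonsing_inv_mul _ (isUnit_det_of_mem_SU2 hγ), one_mul]
  refine ⟨γ, hγ, c.symm g, mem_SU2Torus_iff.2 ⟨?_, by simp [hcg]⟩, c.apply_symm_apply g⟩
  exact mul_mem_SU2 (mul_mem_SU2 (inv_mem_SU2 hγ) hg) hγ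

def SU2Centralizer (S : Set M₂) : Set M₂ := {h | h ∈ SU2 ∧ ∀ s ∈ S, h * s = s * h}

lemma SU2Center_subset_SU2Centralizer (S : Set M₂) : SU2Center ⊆ SU2Centralizer S :=
  fun _ hg => ⟨SU2Torus_subset_SU2 (SU2Center_subset_SU2Torus hg),
    fun s _ => (mul_comm_of_mem_SU2Center hg s).symm⟩

lemma SU2Centralizer_trichotomy {S : Set M₂} (hS : S ⊆ SU2) :
    SU2Centralizer S = SU2 ∨ (∃ γ ∈ SU2, SU2Centralizer S = conjTorus γ) ∨
      SU2Centralizer S = SU2Center := by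
  by_cases hScen : S ⊆ SU2Center
  · exact Or.inl (Set.Subset.antisymm (fun _ hh => hh.1)
      fun h hh => ⟨hh, fun s hs => mul_comm_of_mem_SU2Center (hScen hs) h⟩)
  obtain ⟨s, hsS, hs⟩ := Set.not_subset.1 hScen
  obtain ⟨γ, hγ, hsγ⟩ := exists_mem_conjTorus (hS hsS)
  have hZγ : SU2Centralizer S ⊆ conjTorus γ :=
    fun h hh => mem_conjTorus_of_commute hγ hsγ hs hh.1 (hh.2 s hsS)
  by_cases hZcen : SU2Centralizer S ⊆ SU2Center
  · exact Or.inr (Or.inr (hZcen.antisymm (SU2Center_subset_SU2Centralizer S)))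
  obtain ⟨h, hhZ, hh⟩ := Set.not_subset.1 hZcen
  have hSγ : S ⊆ conjTorus γ :=
    fun s' hs' => mem_conjTorus_of_commute hγ (hZγ hhZ) hh (hS hs') (hhZ.2 s' hs').symm
  refine Or.inr (Or.inl ⟨γ, hγ, hZγ.antisymm fun x hx => ?_⟩)
  exact ⟨conjTorus_subset_SU2 hγ hx, fun s' hs' => conjTorus_mul_comm hγ hx (hSγ hs')⟩

/-- Classification of the Howe subgroups of `SU(2)`: if `H` is the centralizer in `SU(2)` of
some subset `S ⊆ SU(2)`, then exactly one of the following holds: `H = SU(2)`; or `H` is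
conjugate in `SU(2)` to the diagonal maximal torus; or `H` is the center `{I, −I}`.
Hence `SU(2)` has exactly three conjugacy classes of Howe subgroups, corresponding to the
three strata of the `SU(2)` gauge theory. -/
theorem su2_howe_subgroup_classification
    (S H : Set (Matrix (Fin 2) (Fin 2) ℂ)) (hS : S ⊆ SU2)
    (hH : H = {h | h ∈ SU2 ∧ ∀ s ∈ S, h * s = s * h}) :
    (H = SU2 ∧
      ¬(∃ γ ∈ SU2, H = (fun x => γ * x * γ⁻¹) '' SU2Torus) ∧
      ¬(H = {g | g = 1 ∨ g = -1})) ∨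
    (¬(H = SU2) ∧
      (∃ γ ∈ SU2, H = (fun x => γ * x * γ⁻¹) '' SU2Torus) ∧
      ¬(H = {g | g = 1 ∨ g = -1})) ∨
    (¬(H = SU2) ∧
      ¬(∃ γ ∈ SU2, H = (fun x => γ * x * γ⁻¹) '' SU2Torus) ∧
      H = {g | g = 1 ∨ g = -1}) := by
  change H = SU2Centralizer S at hH
  change (H = SU2 ∧ ¬(∃ γ ∈ SU2, H = conjTorus γ) ∧ H ≠ SU2Center) ∨
    (H ≠ SU2 ∧ (∃ γ ∈ SU2, H = conjTorus γ) ∧ H ≠ SU2Center) ∨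
    (H ≠ SU2 ∧ ¬(∃ γ ∈ SU2, H = conjTorus γ) ∧ H = SU2Center)
  subst hH
  rcases SU2Centralizer_trichotomy hS with h | ⟨γ, hγ, h⟩ | h <;> rw [h]
  · exact Or.inl ⟨rfl, fun ⟨γ, hγ, h'⟩ => SU2_ne_conjTorus hγ h', SU2_ne_SU2Center⟩
  · exact Or.inr (Or.inl ⟨(SU2_ne_conjTorus hγ).symm, ⟨γ, hγ, rfl⟩, conjTorus_ne_SU2Center hγ⟩)
  · exact Or.inr (Or.inr ⟨SU2_ne_SU2Center.symm,
      fun ⟨γ, hγ, h'⟩ => conjTorus_ne_SU2Center hγ h'.symm, rfl⟩)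
end
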